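/- For all λ, μ > 0, t ≥ 0, k ∈ ℤ and real z > 0, the series Σ_{j∈ℤ} z^{2j+1}·p_{2k+1,2j+1}(t;λ,μ) converges absolutely and equals e^{−(λ+μ)t}·(z^{2k+1}/h(z))·[ h(z)·cosh(t·h(z)/z) + z(λ−μ)·sinh(t·h(z)/z) ]. -/
import Mathlib


open scoped BigOperators

/-- Inner binomial sum `∑_{k=0}^{n-m} C(n,k) C(n,k+m) ρ^{-2k-m}`. -/
noncomputable def innerSum (ρ : ℝ) (m n : ℕ) : ℝ :=
  ∑ k ∈ Finset.range (n - m + 1),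
    (n.choose k : ℝ) * (n.choose (k + m) : ℝ) * ρ ^ (-(2 * (k : ℤ) + (m : ℤ)))

/-- Series `∑_{n≥m} [x^{2n}/(2n)! + c·x^{2n+1}/(2n+1)!]·innerSum ρ m n`. -/
noncomputable def evenSeries (x c ρ : ℝ) (m : ℕ) : ℝ :=
  ∑' j : ℕ,
    ((x ^ (2 * (m + j)) / (2 * (m + j)).factorial) +
      c * (x ^ (2 * (m + j) + 1) / (2 * (m + j) + 1).factorial)) * innerSum ρ m (m + j)

/-- Series `∑_{n≥m} x^{2n+1}/(2n+1)!·innerSum ρ m n`. -/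
noncomputable def oddSeries (x ρ : ℝ) (m : ℕ) : ℝ :=
  ∑' j : ℕ,
    (x ^ (2 * (m + j) + 1) / (2 * (m + j) + 1).factorial) * innerSum ρ m (m + j)

/-- `p_{2l,2r}(t;λ,μ)`. -/
noncomputable def pEE (lam mu t : ℝ) (l r : ℤ) : ℝ :=
  Real.exp (-(lam + mu) * t) *
    evenSeries (lam * t) ((mu - lam) / lam) (lam / mu) (r - l).natAbs

/-- `p_{2l,2r+1}(t;λ,μ)`. -/
noncomputable def pEO (lam mu t : ℝ) (l r : ℤ) : ℝ :=
  Real.exp (-(lam + mu) * t) *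
    (oddSeries (lam * t) (lam / mu) (r - l).natAbs +
      oddSeries (lam * t) (lam / mu) (r - l + 1).natAbs)

/-- `p_{2l+1,2r}(t;λ,μ)`. -/
noncomputable def pOE (lam mu t : ℝ) (l r : ℤ) : ℝ :=
  Real.exp (-(lam + mu) * t) *
    (oddSeries (mu * t) (mu / lam) (r - l - 1).natAbs +
      oddSeries (mu * t) (mu / lam) (r - l).natAbs)

/-- `p_{2l+1,2r+1}(t;λ,μ)`. -/
noncomputable def pOO (lam mu t : ℝ) (l r : ℤ) : ℝ :=
  Real.exp (-(lam + mu) * t) *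
    evenSeries (mu * t) ((lam - mu) / mu) (mu / lam) (r - l).natAbs

/-- Transition probability `p_{k,n}(t;λ,μ)`, by parity of the states. -/
noncomputable def transP (lam mu t : ℝ) (k n : ℤ) : ℝ :=
  if k % 2 = 0 then
    if n % 2 = 0 then pEE lam mu t (k / 2) (n / 2)
    else pEO lam mu t (k / 2) ((n - 1) / 2)
  else
    if n % 2 = 0 then pOE lam mu t ((k - 1) / 2) (n / 2)
    else pOO lam mu t ((k - 1) / 2) ((n - 1) / 2)

/-- `h(z) = √((μz²+λ)(λz²+μ))`. -/
noncomputable def hFun (lam mu z : ℝ) : ℝ := Real.sqrt ((mu * z ^ 2 + lam) * (lam * z ^ 2 + mu))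

open Finset in
lemma innerSum_eq (y : ℝ) (hy : 0 < y) (m n : ℕ) :
    innerSum y⁻¹ m n = ∑ k ∈ Finset.range (n - m + 1),
      (n.choose k : ℝ) * (n.choose (k + m) : ℝ) * y ^ (2 * k + m) := by
  unfold innerSum
  refine Finset.sum_congr rfl fun k _ => ?_
  congr 1
  rw [inv_zpow, ← zpow_neg, neg_neg,
    show (2 * (k:ℤ) + (m:ℤ)) = ((2*k+m : ℕ) : ℤ) by push_cast; ring, zpow_natCast]

lemma innerSum_nonneg (ρ : ℝ) (hρ : 0 < ρ) (m n : ℕ) : 0 ≤ innerSum ρ m n := by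
  unfold innerSum
  refine Finset.sum_nonneg fun k _ => ?_
  positivity

lemma innerSum_zero (ρ : ℝ) {m n : ℕ} (h : n < m) : innerSum ρ m n = 0 := by
  unfold innerSum
  rw [Nat.sub_eq_zero_of_le h.le]
  simp [Nat.choose_eq_zero_of_lt h]

noncomputable def coeffE (x c : ℝ) (n : ℕ) : ℝ :=
  x ^ (2 * n) / (2 * n).factorial + c * (x ^ (2 * n + 1) / (2 * n + 1).factorial)

lemma evenSeries_eq (x c ρ : ℝ) (m : ℕ) :
    evenSeries x c ρ m = ∑' n : ℕ, coeffE x c n * innerSum ρ m n := by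
  have hinj : Function.Injective (fun j : ℕ => m + j) := fun a b h => by simpa using h
  have hsupp : Function.support (fun n => coeffE x c n * innerSum ρ m n) ⊆
      Set.range (fun j : ℕ => m + j) := by
    intro n hn
    rcases le_or_gt m n with h | h
    · exact ⟨n - m, by simp; omega⟩
    · simp [innerSum_zero ρ h] at hn
  rw [evenSeries, ← hinj.tsum_eq hsupp]
  rfl

lemma sum_T (y z : ℝ) (hy : 0 < y) (hz : 0 < z) (n : ℕ) :
    ∑ m ∈ Finset.Icc (-(n:ℤ)) (n:ℤ), z ^ (2 * m) * innerSum y⁻¹ m.natAbs n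
      = ((1 + z ^ 2 * y) * (1 + y / z ^ 2)) ^ n := by
  have hzne : z ≠ 0 := hz.ne'
  have hzp : ∀ i j : ℕ, (z : ℝ) ^ (2 * (i:ℤ) - 2 * (j:ℤ)) = z ^ (2*i) / z ^ (2*j) := by
    intro i j
    rw [show (2 * (i:ℤ) - 2 * (j:ℤ)) = ((2*i : ℕ) : ℤ) - ((2*j : ℕ) : ℤ) by push_cast; ring,
      zpow_sub₀ hzne, zpow_natCast, zpow_natCast]
  have hR : ((1 + z ^ 2 * y) * (1 + y / z ^ 2)) ^ n
      = ∑ p ∈ Finset.range (n+1) ×ˢ Finset.range (n+1),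
          (n.choose p.1 : ℝ) * (n.choose p.2 : ℝ) * y ^ (p.1 + p.2) *
            z ^ (2 * (p.1:ℤ) - 2 * (p.2:ℤ)) := by
    rw [mul_pow, show (1 + z^2*y) = (z^2*y + 1) by ring, show (1 + y/z^2) = (y/z^2 + 1) by ring,
      add_pow, add_pow, Finset.sum_mul_sum, ← Finset.sum_product']
    refine Finset.sum_congr rfl fun p hp => ?_
    rw [hzp, mul_pow, div_pow, pow_add]
    have : (z:ℝ)^2 ≠ 0 := by positivity
    field_simp
    ring
  rw [hR]
  have hL : ∀ m ∈ Finset.Icc (-(n:ℤ)) (n:ℤ), z ^ (2*m) * innerSum y⁻¹ m.natAbs n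
      = ∑ k ∈ Finset.range (n - m.natAbs + 1),
          z ^ (2*m) * ((n.choose k : ℝ) * (n.choose (k + m.natAbs)) * y ^ (2*k + m.natAbs)) := by
    intro m _
    rw [innerSum_eq y hy, Finset.mul_sum]
  rw [Finset.sum_congr rfl hL, Finset.sum_sigma']
  refine Finset.sum_nbij' (i := fun p => (p.2 + p.1.toNat, p.2 + (-p.1).toNat))
    (j := fun q => ⟨(q.1 : ℤ) - (q.2 : ℤ), min q.1 q.2⟩) ?_ ?_ ?_ ?_ ?_
  · rintro ⟨m, kk⟩ hp
    simp only [Finset.mem_sigma, Finset.mem_Icc, Finset.mem_range, Finset.mem_product] at hp ⊢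
    omega
  · rintro ⟨i, j⟩ hq
    simp only [Finset.mem_sigma, Finset.mem_Icc, Finset.mem_range, Finset.mem_product] at hq ⊢
    omega
  · rintro ⟨m, kk⟩ hp
    simp only [Finset.mem_sigma, Finset.mem_Icc, Finset.mem_range] at hp
    have h1 : ((kk + m.toNat : ℕ) : ℤ) - ((kk + (-m).toNat : ℕ) : ℤ) = m := by push_cast; omega
    have h2 : (kk + m.toNat) ⊓ (kk + (-m).toNat) = kk := by omega
    simp only [h1, h2]
  · rintro ⟨i, j⟩ hq
    simp only [Finset.mem_product, Finset.mem_range] at hq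
    refine Prod.ext ?_ ?_ <;> simp <;> omega
  · rintro ⟨m, kk⟩ hp
    simp only [Finset.mem_sigma, Finset.mem_Icc, Finset.mem_range] at hp
    have hexp : 2 * ((kk + m.toNat : ℕ) : ℤ) - 2 * ((kk + (-m).toNat : ℕ) : ℤ) = 2 * m := by
      push_cast; omega
    have hysum : (kk + m.toNat) + (kk + (-m).toNat) = 2 * kk + m.natAbs := by omega
    have hch : (n.choose (kk + m.toNat) : ℝ) * (n.choose (kk + (-m).toNat) : ℝ)
        = (n.choose kk : ℝ) * (n.choose (kk + m.natAbs) : ℝ) := by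
      rcases le_or_gt 0 m with h | h
      · rw [show (-m).toNat = 0 by omega, show m.toNat = m.natAbs by omega, add_zero, mul_comm]
      · rw [show m.toNat = 0 by omega, show (-m).toNat = m.natAbs by omega, add_zero]
    simp only
    rw [hexp, hysum, hch]
    ring

lemma key (x c y z : ℝ) (hx : 0 ≤ x) (hy : 0 < y) (hz : 0 < z) :
    Summable (fun m : ℤ => |z ^ (2 * m) * evenSeries x c y⁻¹ m.natAbs|) ∧
    ∑' m : ℤ, z ^ (2 * m) * evenSeries x c y⁻¹ m.natAbs
      = Real.cosh (x * Real.sqrt ((1 + z ^ 2 * y) * (1 + y / z ^ 2)))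
        + (c / Real.sqrt ((1 + z ^ 2 * y) * (1 + y / z ^ 2)))
          * Real.sinh (x * Real.sqrt ((1 + z ^ 2 * y) * (1 + y / z ^ 2))) := by
  set Q : ℝ := (1 + z ^ 2 * y) * (1 + y / z ^ 2) with hQdef
  have hQ : 0 < Q := by positivity
  set q : ℝ := Real.sqrt Q with hqdef
  have hq : 0 < q := Real.sqrt_pos.mpr hQ
  have hq2 : q ^ 2 = Q := Real.sq_sqrt hQ.le
  have hzm : ∀ m : ℤ, (0:ℝ) < z ^ (2 * m) := fun m => zpow_pos hz _
  set A : ℕ × ℤ → ℝ :=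
    fun p => coeffE x c p.1 * (z ^ (2 * p.2) * innerSum y⁻¹ p.2.natAbs p.1) with hA
  have hvanish : ∀ (nn : ℕ) (m : ℤ), m ∉ Finset.Icc (-(nn:ℤ)) nn → A (nn, m) = 0 := by
    intro nn m hm
    have hlt : nn < m.natAbs := by simp only [Finset.mem_Icc] at hm; omega
    simp [hA, innerSum_zero _ hlt]
  have habs : ∀ p : ℕ × ℤ,
      |A p| = |coeffE x c p.1| * (z ^ (2 * p.2) * innerSum y⁻¹ p.2.natAbs p.1) := by
    intro p
    rw [hA, abs_mul,
      abs_of_nonneg (mul_nonneg (hzm p.2).le (innerSum_nonneg _ (by positivity) _ _))]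
  have hfib : ∀ nn : ℕ, ∑' m : ℤ, A (nn, m) = coeffE x c nn * Q ^ nn := by
    intro nn
    rw [tsum_eq_sum (fun m hm => hvanish nn m hm)]
    simp only [hA]
    rw [← Finset.mul_sum, sum_T y z hy hz]
  have hfibabs : ∀ nn : ℕ, ∑' m : ℤ, |A (nn, m)| = |coeffE x c nn| * Q ^ nn := by
    intro nn
    rw [tsum_eq_sum (s := Finset.Icc (-(nn:ℤ)) nn)
      (fun m hm => by rw [hvanish nn m hm, abs_zero])]
    simp only [habs]
    rw [← Finset.mul_sum, sum_T y z hy hz]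
  have hterm : ∀ (d : ℝ) (nn : ℕ),
      (x ^ (2*nn) / (2*nn).factorial + d * (x ^ (2*nn+1) / (2*nn+1).factorial)) * Q ^ nn
        = (x*q) ^ (2*nn) / (2*nn).factorial
          + d / q * ((x*q) ^ (2*nn+1) / (2*nn+1).factorial) := by
    intro d nn
    have hQn : Q ^ nn = q ^ (2*nn) := by rw [← hq2, ← pow_mul]
    rw [hQn, mul_pow, mul_pow]
    have h1 : ((2*nn).factorial : ℝ) ≠ 0 := by positivity
    have h2 : ((2*nn+1).factorial : ℝ) ≠ 0 := by positivity
    field_simp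
    ring
  have hs1 : Summable (fun nn : ℕ => (x*q) ^ (2*nn) / (2*nn).factorial) :=
    (Real.summable_pow_div_factorial (x*q)).comp_injective
      (fun a b h => by dsimp only at h; omega : Function.Injective (fun nn : ℕ => 2*nn))
  have hs2 : Summable (fun nn : ℕ => (x*q) ^ (2*nn+1) / (2*nn+1).factorial) :=
    (Real.summable_pow_div_factorial (x*q)).comp_injective
      (fun a b h => by dsimp only at h; omega : Function.Injective (fun nn : ℕ => 2*nn+1))
  have hcb : ∀ nn : ℕ, |coeffE x c nn| * Q ^ nn ≤
      (x*q) ^ (2*nn) / (2*nn).factorial + |c| / q * ((x*q) ^ (2*nn+1) / (2*nn+1).factorial) := by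
    intro nn
    rw [← hterm |c| nn]
    have h1 : |coeffE x c nn|
        ≤ x ^ (2*nn) / (2*nn).factorial + |c| * (x ^ (2*nn+1) / (2*nn+1).factorial) := by
      unfold coeffE
      refine (abs_add_le _ _).trans ?_
      gcongr
      · rw [abs_of_nonneg (by positivity)]
      · rw [abs_mul, abs_of_nonneg (show (0:ℝ) ≤ x ^ (2*nn+1) / (2*nn+1).factorial by positivity)]
    exact mul_le_mul_of_nonneg_right h1 (by positivity)
  have hBsum : Summable (fun p : ℕ × ℤ => |A p|) := by
    rw [summable_prod_of_nonneg (fun p => abs_nonneg _)]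
    refine ⟨fun nn => ?_, ?_⟩
    · exact summable_of_ne_finset_zero
        (fun m hm => by rw [hvanish nn m hm, abs_zero])
    · refine Summable.of_nonneg_of_le (fun nn => tsum_nonneg fun m => abs_nonneg _)
        (fun nn => ?_) (hs1.add (hs2.mul_left (|c|/q)))
      rw [hfibabs]
      exact hcb nn
  have hAsum : Summable A := hBsum.of_abs
  have htsumA : ∑' p, A p = Real.cosh (x*q) + c / q * Real.sinh (x*q) := by
    rw [Summable.tsum_prod hAsum]
    calc ∑' nn : ℕ, ∑' m : ℤ, A (nn, m) = ∑' nn : ℕ, coeffE x c nn * Q ^ nn :=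
          tsum_congr hfib
    _ = ∑' nn : ℕ, ((x*q) ^ (2*nn) / (2*nn).factorial
          + c / q * ((x*q) ^ (2*nn+1) / (2*nn+1).factorial)) :=
          tsum_congr fun nn => hterm c nn
    _ = Real.cosh (x*q) + c / q * Real.sinh (x*q) := by
          rw [Summable.tsum_add hs1 (hs2.mul_left (c/q)), tsum_mul_left,
            Real.cosh_eq_tsum, Real.sinh_eq_tsum]
  have hswap : ∑' p : ℕ × ℤ, A p = ∑' m : ℤ, ∑' nn : ℕ, A (nn, m) := by
    rw [Summable.tsum_prod hAsum]
    exact (Summable.tsum_comm (f := fun (nn : ℕ) (m : ℤ) => A (nn, m)) hAsum).symm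
  have hin : ∀ m : ℤ, ∑' nn : ℕ, A (nn, m) = z ^ (2*m) * evenSeries x c y⁻¹ m.natAbs := by
    intro m
    rw [evenSeries_eq, ← tsum_mul_left]
    refine tsum_congr fun nn => ?_
    simp only [hA]
    ring
  constructor
  · have hsw : Summable (fun p : ℤ × ℕ => |A p.swap|) := hBsum.prod_symm
    have hb : Summable (fun m : ℤ => ∑' nn : ℕ, |A (nn, m)|) :=
      ((summable_prod_of_nonneg (fun p => abs_nonneg _)).mp hsw).2
    refine Summable.of_nonneg_of_le (fun m => abs_nonneg _) (fun m => ?_) hb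
    rw [← hin m]
    have hsn : Summable (fun nn : ℕ => ‖A (nn, m)‖) := by
      simpa [Real.norm_eq_abs] using
        ((summable_prod_of_nonneg (fun p => abs_nonneg _)).mp hsw).1 m
    simpa [Real.norm_eq_abs] using norm_tsum_le_tsum_norm hsn
  · calc ∑' m : ℤ, z ^ (2*m) * evenSeries x c y⁻¹ m.natAbs
        = ∑' m : ℤ, ∑' nn : ℕ, A (nn, m) := tsum_congr fun m => (hin m).symm
    _ = ∑' p : ℕ × ℤ, A p := hswap.symm
    _ = _ := htsumA


/-- Odd–odd generating function: `∑_{j∈ℤ} z^{2j+1} p_{2k+1,2j+1}(t)` converges absolutely and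
equals `e^{-(λ+μ)t}·(z^{2k+1}/h(z))·[h(z)cosh(t h(z)/z) + z(λ-μ)sinh(t h(z)/z)]`. -/
theorem odd_generating_function (lam mu : ℝ) (hlam : 0 < lam) (hmu : 0 < mu)
    (t : ℝ) (ht : 0 ≤ t) (k : ℤ) (z : ℝ) (hz : 0 < z) :
    Summable (fun j : ℤ => |z ^ (2 * j + 1) * transP lam mu t (2 * k + 1) (2 * j + 1)|) ∧
    ∑' j : ℤ, z ^ (2 * j + 1) * transP lam mu t (2 * k + 1) (2 * j + 1) =
      Real.exp (-(lam + mu) * t) * (z ^ (2 * k + 1) / hFun lam mu z) *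
        (hFun lam mu z * Real.cosh (t * hFun lam mu z / z) +
          z * (lam - mu) * Real.sinh (t * hFun lam mu z / z)) := by
  have hzne : z ≠ 0 := hz.ne'
  have hh : 0 < hFun lam mu z := Real.sqrt_pos.mpr (by positivity)
  set x : ℝ := mu * t with hxdef
  have hx : 0 ≤ x := by positivity
  set c : ℝ := (lam - mu) / mu with hcdef
  set y : ℝ := lam / mu with hydef
  have hy : 0 < y := by positivity
  have hinv : mu / lam = y⁻¹ := by rw [hydef, inv_div]
  obtain ⟨hsummK, htsumK⟩ := key x c y z hx hy hz
  set E : ℝ := Real.exp (-(lam + mu) * t) with hEdef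
  have hE : 0 < E := Real.exp_pos _
  have htrans : ∀ j : ℤ, transP lam mu t (2*k+1) (2*j+1)
      = E * evenSeries x c y⁻¹ (j - k).natAbs := by
    intro j
    rw [transP, if_neg (by omega), if_neg (by omega)]
    rw [show (2*k+1-1)/2 = k by omega, show (2*j+1-1)/2 = j by omega]
    rw [pOO, hinv, ← hxdef, ← hcdef, ← hEdef]
  have hZP : (0:ℝ) < z ^ (2*k+1) := zpow_pos hz _
  have key2 : ∀ j : ℤ, z ^ (2*j+1) * transP lam mu t (2*k+1) (2*j+1)
      = (E * z ^ (2*k+1)) * (z ^ (2*(j-k)) * evenSeries x c y⁻¹ (j-k).natAbs) := by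
    intro j
    rw [htrans j, show (2*j+1 : ℤ) = (2*k+1) + 2*(j-k) by ring, zpow_add₀ hzne]
    ring
  set q : ℝ := Real.sqrt ((1 + z ^ 2 * y) * (1 + y / z ^ 2)) with hqdef
  have hqh : q = hFun lam mu z / (mu * z) := by
    have h2 : ((hFun lam mu z)/(mu*z))^2 = (1 + z^2*y)*(1+y/z^2) := by
      rw [div_pow, hFun, Real.sq_sqrt (by positivity), hydef]
      field_simp
      ring
    rw [hqdef, ← h2, Real.sqrt_sq (by positivity)]
  have hxq : x * q = t * hFun lam mu z / z := by
    rw [hqh, hxdef]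
    field_simp
  have hcq : c / q = z * (lam-mu) / hFun lam mu z := by
    rw [hqh, hcdef]
    field_simp
  constructor
  · have hF : Summable ((fun m : ℤ => |z ^ (2*m) * evenSeries x c y⁻¹ m.natAbs|) ∘
        (fun j : ℤ => j - k)) :=
      hsummK.comp_injective (fun a b h => by omega)
    refine (hF.mul_left (E * z ^ (2*k+1))).congr (fun j => ?_)
    dsimp only [Function.comp_apply]
    rw [key2 j]
    conv_rhs => rw [abs_mul]
    rw [abs_of_pos (show (0:ℝ) < E * z ^ (2*k+1) by positivity)]
  · calc ∑' j : ℤ, z ^ (2*j+1) * transP lam mu t (2*k+1) (2*j+1)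
        = ∑' j : ℤ, (E * z ^ (2*k+1)) * (z ^ (2*(j-k)) * evenSeries x c y⁻¹ (j-k).natAbs) :=
          tsum_congr key2
    _ = (E * z ^ (2*k+1)) * ∑' j : ℤ, z ^ (2*(j-k)) * evenSeries x c y⁻¹ (j-k).natAbs :=
          tsum_mul_left
    _ = (E * z ^ (2*k+1)) *
          ∑' m : ℤ, z ^ (2*m) * evenSeries x c y⁻¹ m.natAbs := by
          congr 1
          exact (Equiv.subRight k).tsum_eq
            (fun m : ℤ => z ^ (2*m) * evenSeries x c y⁻¹ m.natAbs)
    _ = (E * z ^ (2*k+1)) * (Real.cosh (x*q) + c/q * Real.sinh (x*q)) := by rw [htsumK]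
    _ = _ := by
          rw [hxq, hcq]
          field_simp
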